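/- arXiv:1602.03367 — 3 statements merged into one kernel-verified Lean document; each statement's English description precedes it below -/
import Mathlib

section
/- Let X, Y be locally convex Hausdorff TVS and K ⊂ Y a closed pointed convex cone with nonempty interior. If F : X → Y ∪ {+∞_Y} is a proper mapping, then epi_K F* is a closed subset of L(X,Y) × Y, where L(X,Y) carries the topology of pointwise convergence. -/
open Set Pointwise Topology

def wSupElems {Y : Type*} [AddCommGroup Y] [TopologicalSpace Y] (K M : Set Y) : Set Y :=
  {w | (∀ v ∈ M, w - v ∉ -(interior K)) ∧
       ∀ u : Y, u - w ∈ -(interior K) → ∃ v ∈ M, u - v ∈ -(interior K)}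

def epiConj {X Y : Type*} [AddCommGroup X] [Module ℝ X] [TopologicalSpace X]
    [AddCommGroup Y] [Module ℝ Y] [TopologicalSpace Y]
    (K : Set Y) (H : X → Y) (domH : Set X) : Set ((X →L[ℝ] Y) × Y) :=
  {p | ∃ w ∈ wSupElems K ((fun x => p.1 x - H x) '' domH), p.2 - w ∈ K}

/-!
A point `y` lies in `epi_K F*(L)` iff it is not strictly dominated (with respect to `int K`) by
any value `L x - F x`; each of these conditions is closed in `(L, y)` for the pointwise topology.
For the nontrivial direction one moves down from `y` along an interior direction `e` of `K`:
the scales `t` for which `y - t • e` is not strictly dominated form a closed set containing `0`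
and bounded above, and `w = y - t₀ • e` at its supremum `t₀` is a weak supremum below `y`.
-/

section ConvexCone

variable {Y : Type*} [AddCommGroup Y] [Module ℝ Y] {K : Set Y}

theorem add_mem_of_convex_of_smul_subset (hconv : Convex ℝ K)
    (hcone : ∀ c : ℝ, 0 < c → c • K ⊆ K) {a b : Y} (ha : a ∈ K) (hb : b ∈ K) :
    a + b ∈ K := by
  have hmid : (1 / 2 : ℝ) • a + (1 / 2 : ℝ) • b ∈ K :=
    hconv ha hb (by norm_num) (by norm_num) (by norm_num)
  have := hcone 2 two_pos (smul_mem_smul_set hmid)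
  rwa [smul_add, smul_smul, smul_smul, mul_one_div_cancel two_ne_zero, one_smul, one_smul]
    at this

theorem smul_mem_of_smul_subset (hcone : ∀ c : ℝ, 0 < c → c • K ⊆ K) (h0 : (0 : Y) ∈ K)
    {t : ℝ} (ht : 0 ≤ t) {a : Y} (ha : a ∈ K) : t • a ∈ K := by
  rcases ht.eq_or_lt with rfl | ht
  · rwa [zero_smul]
  · exact hcone t ht (smul_mem_smul_set ha)

variable [TopologicalSpace Y]

theorem interior_add_subset_interior [IsTopologicalAddGroup Y] (hconv : Convex ℝ K)
    (hcone : ∀ c : ℝ, 0 < c → c • K ⊆ K) : interior K + K ⊆ interior K :=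
  interior_maximal
    (add_subset_iff.2 fun _ ha _ hb =>
      add_mem_of_convex_of_smul_subset hconv hcone (interior_subset ha) hb)
    isOpen_interior.add_right

theorem smul_mem_interior_of_smul_subset [ContinuousSMul ℝ Y]
    (hcone : ∀ c : ℝ, 0 < c → c • K ⊆ K)
    {c : ℝ} (hc : 0 < c) {a : Y} (ha : a ∈ interior K) : c • a ∈ interior K := by
  have : c • interior K ⊆ interior K := by
    rw [← interior_smul₀ hc.ne']
    exact interior_mono (hcone c hc)
  exact this (smul_mem_smul_set ha)

theorem IsOpen.exists_pos_sub_smul_mem [IsTopologicalAddGroup Y] [ContinuousSMul ℝ Y]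
    {U : Set Y} (hU : IsOpen U) {a : Y} (ha : a ∈ U) (z : Y) :
    ∃ s : ℝ, 0 < s ∧ a - s • z ∈ U := by
  have hcont : Continuous fun s : ℝ => a - s • z := by fun_prop
  have hnhds : ∀ᶠ s in 𝓝[>] (0 : ℝ), a - s • z ∈ U :=
    nhdsWithin_le_nhds (hcont.continuousAt.preimage_mem_nhds (by simpa using hU.mem_nhds ha))
  obtain ⟨s, hsU, hs⟩ := (hnhds.and self_mem_nhdsWithin).exists
  exact ⟨s, hs, hsU⟩

end ConvexCone

section StrictDomination

variable {Y : Type*} [AddCommGroup Y] [TopologicalSpace Y] {K : Set Y}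

def dominatedSet (K M : Set Y) : Set Y :=
  {u | ∃ v ∈ M, u - v ∈ -(interior K)}

theorem isOpen_dominatedSet [IsTopologicalAddGroup Y] (K M : Set Y) :
    IsOpen (dominatedSet K M) := by
  have : dominatedSet K M = ⋃ v ∈ M, (· - v) ⁻¹' (-(interior K)) := by
    ext u
    simp [dominatedSet]
  rw [this]
  exact isOpen_biUnion fun v _ => isOpen_interior.neg.preimage (by fun_prop)

variable [Module ℝ Y] [IsTopologicalAddGroup Y]

theorem sub_mem_dominatedSet (hconv : Convex ℝ K) (hcone : ∀ c : ℝ, 0 < c → c • K ⊆ K)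
    {M : Set Y} {u k : Y}
    (hu : u ∈ dominatedSet K M) (hk : k ∈ K) : u - k ∈ dominatedSet K M := by
  obtain ⟨v, hv, huv⟩ := hu
  refine ⟨v, hv, ?_⟩
  rw [mem_neg] at huv ⊢
  rw [show -(u - k - v) = -(u - v) + k by abel]
  exact interior_add_subset_interior hconv hcone (add_mem_add huv hk)

theorem sub_smul_mem_dominatedSet_of_le (hconv : Convex ℝ K)
    (hcone : ∀ c : ℝ, 0 < c → c • K ⊆ K) (h0 : (0 : Y) ∈ K) {M : Set Y} {e y : Y}
    (he : e ∈ K) {t t' : ℝ} (ht : y - t • e ∈ dominatedSet K M) (htt' : t ≤ t') :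
    y - t' • e ∈ dominatedSet K M := by
  have := sub_mem_dominatedSet hconv hcone ht
    (smul_mem_of_smul_subset hcone h0 (sub_nonneg.2 htt') he)
  rwa [sub_smul, sub_sub, add_sub_cancel] at this

variable [ContinuousSMul ℝ Y]

theorem exists_sub_smul_mem_dominatedSet (hcone : ∀ c : ℝ, 0 < c → c • K ⊆ K)
    {M : Set Y} (hM : M.Nonempty) {e : Y} (he : e ∈ interior K) (y : Y) :
    ∃ t : ℝ, y - t • e ∈ dominatedSet K M := by
  obtain ⟨v, hv⟩ := hM
  obtain ⟨s, hs, hse⟩ := isOpen_interior.exists_pos_sub_smul_mem he (y - v)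
  refine ⟨s⁻¹, v, hv, ?_⟩
  rw [mem_neg, show -(y - s⁻¹ • e - v) = s⁻¹ • (e - s • (y - v)) by
    rw [smul_sub, smul_smul, inv_mul_cancel₀ hs.ne', one_smul]; abel]
  exact smul_mem_interior_of_smul_subset hcone (inv_pos.2 hs) hse

theorem exists_mem_wSupElems_sub_mem (hconv : Convex ℝ K)
    (hcone : ∀ c : ℝ, 0 < c → c • K ⊆ K) (h0 : (0 : Y) ∈ K) (hKint : (interior K).Nonempty)
    {M : Set Y} (hM : M.Nonempty) {y : Y} (hy : y ∉ dominatedSet K M) :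
    ∃ w ∈ wSupElems K M, y - w ∈ K := by
  obtain ⟨e, he⟩ := hKint
  set T : Set ℝ := {t | y - t • e ∉ dominatedSet K M}
  have hT : IsClosed T :=
    (isOpen_dominatedSet K M).isClosed_compl.preimage (by fun_prop)
  have h0T : (0 : ℝ) ∈ T := by simpa [T] using hy
  have hTbdd : BddAbove T := by
    obtain ⟨t₁, ht₁⟩ := exists_sub_smul_mem_dominatedSet hcone hM he y
    exact ⟨t₁, fun t ht => not_lt.1 fun h =>
      ht (sub_smul_mem_dominatedSet_of_le hconv hcone h0 (interior_subset he) ht₁ h.le)⟩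
  set t₀ := sSup T
  have ht₀T : t₀ ∈ T := hT.csSup_mem ⟨0, h0T⟩ hTbdd
  refine ⟨y - t₀ • e, ⟨fun v hv h => ht₀T ⟨v, hv, h⟩, fun u hu => ?_⟩, ?_⟩
  · rw [mem_neg, neg_sub] at hu
    obtain ⟨s, hs, hsK⟩ := isOpen_interior.exists_pos_sub_smul_mem hu e
    have hbeyond : y - (t₀ + s) • e ∈ dominatedSet K M := by
      by_contra h
      linarith [le_csSup hTbdd h]
    have := sub_mem_dominatedSet hconv hcone hbeyond (interior_subset hsK)
    rwa [show y - (t₀ + s) • e - (y - t₀ • e - u - s • e) = u by rw [add_smul]; abel] at this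
  · rw [sub_sub_cancel]
    exact smul_mem_of_smul_subset hcone h0 (le_csSup hTbdd h0T) (interior_subset he)

theorem exists_mem_wSupElems_sub_mem_iff (hconv : Convex ℝ K)
    (hcone : ∀ c : ℝ, 0 < c → c • K ⊆ K) (h0 : (0 : Y) ∈ K) (hKint : (interior K).Nonempty)
    {M : Set Y} (hM : M.Nonempty) (y : Y) :
    (∃ w ∈ wSupElems K M, y - w ∈ K) ↔ y ∉ dominatedSet K M := by
  refine ⟨?_, exists_mem_wSupElems_sub_mem hconv hcone h0 hKint hM⟩
  rintro ⟨w, ⟨hwM, -⟩, hyw⟩ hy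
  obtain ⟨v, hv, hwv⟩ := sub_mem_dominatedSet hconv hcone hy hyw
  exact hwM v hv (by rwa [sub_sub_cancel] at hwv)

end StrictDomination

theorem stmt9_general {X Y : Type*}
    [AddCommGroup X] [Module ℝ X] [TopologicalSpace X]
    [AddCommGroup Y] [Module ℝ Y] [TopologicalSpace Y] [IsTopologicalAddGroup Y]
    [ContinuousSMul ℝ Y]
    (K : Set Y) (hKconv : Convex ℝ K)
    (hKcone : ∀ c : ℝ, 0 < c → c • K ⊆ K) (hK0 : (0:Y) ∈ K)
    (hKint : (interior K).Nonempty)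
    (F : X → Y) (domF : Set X) (hFprop : domF.Nonempty) :
    @IsClosed ((X →L[ℝ] Y) × Y)
      (@instTopologicalSpaceProd (X →L[ℝ] Y) Y
      (TopologicalSpace.induced (fun L : X →L[ℝ] Y => (⇑L : X → Y)) Pi.topologicalSpace) _)
      (epiConj K F domF) := by
  let _ : TopologicalSpace (X →L[ℝ] Y) :=
    TopologicalSpace.induced (fun L : X →L[ℝ] Y => (⇑L : X → Y)) Pi.topologicalSpace
  have hepi : epiConj K F domF =
      ⋂ x ∈ domF, {p : (X →L[ℝ] Y) × Y | p.2 - (p.1 x - F x) ∉ -(interior K)} := by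
    ext p
    rw [epiConj, mem_ofPred_eq,
      exists_mem_wSupElems_sub_mem_iff hKconv hKcone hK0 hKint (hFprop.image _)]
    simp [dominatedSet]
  rw [hepi]
  refine isClosed_biInter fun x _ => isOpen_interior.neg.isClosed_compl.preimage ?_
  have hevalx : Continuous fun L : X →L[ℝ] Y => L x :=
    (continuous_apply x).comp continuous_induced_dom
  exact continuous_snd.sub ((hevalx.comp continuous_fst).sub continuous_const)

theorem stmt9 {X Y : Type*}
    [AddCommGroup X] [Module ℝ X] [TopologicalSpace X]
    [AddCommGroup Y] [Module ℝ Y] [TopologicalSpace Y] [IsTopologicalAddGroup Y]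
    [ContinuousSMul ℝ Y] [T2Space Y] [LocallyConvexSpace ℝ Y]
    (K : Set Y) (hKcl : IsClosed K) (hKconv : Convex ℝ K)
    (hKcone : ∀ c : ℝ, 0 < c → c • K ⊆ K) (hK0 : (0:Y) ∈ K)
    (hKpointed : K ∩ (-K) ⊆ {0}) (hKint : (interior K).Nonempty)
    (F : X → Y) (domF : Set X) (hFprop : domF.Nonempty) :
    @IsClosed ((X →L[ℝ] Y) × Y)
      (@instTopologicalSpaceProd (X →L[ℝ] Y) Y
      (TopologicalSpace.induced (fun L : X →L[ℝ] Y => (⇑L : X → Y)) Pi.topologicalSpace) _)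
      (epiConj K F domF) :=
  stmt9_general K hKconv hKcone hK0 hKint F domF hFprop
end

section
/- (Asymptotic representation) Let X, Y, Z be locally convex Hausdorff TVS, K ⊂ Y a closed pointed convex cone with int K ≠ ∅, S ⊂ Z a closed convex cone, C ⊂ X a nonempty closed convex set, F : X → Y ∪ {+∞_Y} proper K-convex with y*∘F lsc for every y* ∈ Y*, and G : X → Z ∪ {+∞_Z} proper S-convex and S-epi closed. Let A := C ∩ G⁻¹(−S) and assume A ∩ dom F ≠ ∅. Then epi_K(F + I_A)* = cl[ ⋃_{T ∈ L₊(S,K)} epi_K(F + I_C + T∘G)* ]. -/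
/-!
`(L, y)` lies in `epi_K (F + I_A)*` exactly when no value `L x - F x - y`, `x ∈ A ∩ dom F`, lies in
`int K`. Separating `y + int K` from the convex set `{L x - F x - k}` yields `y* ∈ K⁺` with
`y* k₀ = 1` and `y* (L x - F x) ≤ y* y` on `A ∩ dom F`, so `(y* ∘ L, y* y)` lies in the scalar
epigraph `epi (y* ∘ F + I_A)*`. By the scalar representation it is a weak* limit of pairs `(x*, r)`
in `epi (y* ∘ F + I_C + z* ∘ G)*`, `z* ∈ S⁺`, and each such pair lifts along `k₀` to the point
`(L + (x* - y* ∘ L) k₀, y + (r - y* y) k₀)` of `epi_K (F + I_C + T ∘ G)*` with `T = z* (·) k₀`.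
The scalar representation is a duality statement: a weak*-closed half-space involves finitely
many evaluations, and the half-spaces containing all Lagrange pairs `(x*, r)` are controlled by
the closed convex epigraph of the perturbation `(x, z) ↦ f x + I_C x + I_{z - G x ∈ S}`.
Conversely `T (G x) ∈ -K` on `A`, and the defining condition is closed under pointwise limits.
-/

open Set Pointwise Topology

theorem nonpos_of_forall_nonneg_mul_le {a b : ℝ} (h : ∀ t : ℝ, 0 ≤ t → t * a ≤ b) : a ≤ 0 := by
  by_contra! ha
  have := h ((|b| + 1) / a) (by positivity)
  rw [div_mul_cancel₀ _ ha.ne'] at this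
  linarith [le_abs_self b]

theorem sub_mem_neg_iff {G : Type*} [SubtractionMonoid G] {s : Set G} {a b : G} :
    a - b ∈ -s ↔ b - a ∈ s := by
  rw [mem_neg, neg_sub]

section Cone

variable {Y : Type*} [AddCommGroup Y] [Module ℝ Y] {K : Set Y}

theorem cone_add_mem (hKconv : Convex ℝ K) (hKcone : ∀ c : ℝ, 0 < c → c • K ⊆ K)
    {a b : Y} (ha : a ∈ K) (hb : b ∈ K) : a + b ∈ K := by
  have hmid : (2⁻¹ : ℝ) • a + (2⁻¹ : ℝ) • b ∈ K := hKconv ha hb (by norm_num) (by norm_num)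
    (by norm_num)
  simpa [smul_add, smul_smul] using hKcone 2 two_pos (smul_mem_smul_set hmid)

theorem cone_smul_mem (hKcone : ∀ c : ℝ, 0 < c → c • K ⊆ K) (hK0 : (0 : Y) ∈ K)
    {c : ℝ} (hc : 0 ≤ c) {k : Y} (hk : k ∈ K) : c • k ∈ K := by
  rcases hc.lt_or_eq with hc | rfl
  · exact hKcone c hc (smul_mem_smul_set hk)
  · rwa [zero_smul]

variable [TopologicalSpace Y]

theorem cone_smul_mem_interior [ContinuousConstSMul ℝ Y] (hKcone : ∀ c : ℝ, 0 < c → c • K ⊆ K)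
    {c : ℝ} (hc : 0 < c) {k : Y} (hk : k ∈ interior K) : c • k ∈ interior K := by
  have : c • interior K ⊆ interior K := by
    rw [← interior_smul₀ hc.ne']
    exact interior_mono (hKcone c hc)
  exact this (smul_mem_smul_set hk)

variable [IsTopologicalAddGroup Y]

theorem cone_interior_add_mem (hKconv : Convex ℝ K) (hKcone : ∀ c : ℝ, 0 < c → c • K ⊆ K)
    {a b : Y} (ha : a ∈ interior K) (hb : b ∈ K) : a + b ∈ interior K := by
  refine interior_maximal ?_ (isOpen_interior.add_right (t := {b})) ⟨a, ha, b, rfl, rfl⟩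
  rintro _ ⟨u, hu, v, rfl, rfl⟩
  exact cone_add_mem hKconv hKcone (interior_subset hu) hb

theorem sub_notMem_interior_of_mem_wSupElems (hKconv : Convex ℝ K)
    (hKcone : ∀ c : ℝ, 0 < c → c • K ⊆ K) {V : Set Y} {w y : Y} (hw : w ∈ wSupElems K V)
    (hyw : y - w ∈ K) : ∀ v ∈ V, v - y ∉ interior K := by
  intro v hv hvy
  refine hw.1 v hv (sub_mem_neg_iff.mpr ?_)
  simpa using cone_interior_add_mem hKconv hKcone hvy hyw

variable [ContinuousSMul ℝ Y]

theorem exists_pos_add_smul_mem_interior {a : Y} (ha : a ∈ interior K) (v : Y) :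
    ∃ ε : ℝ, 0 < ε ∧ a + ε • v ∈ interior K := by
  have hcont : Continuous fun ε : ℝ => a + ε • v := by fun_prop
  have hev : ∀ᶠ ε in 𝓝[>] (0 : ℝ), a + ε • v ∈ interior K :=
    nhdsWithin_le_nhds (hcont.tendsto' 0 a (by simp) |>.eventually
      (isOpen_interior.mem_nhds ha))
  exact (hev.and self_mem_nhdsWithin).exists.imp fun ε h => ⟨h.2, h.1⟩

theorem pos_of_mem_interior_of_nonneg {φ : Y →L[ℝ] ℝ} (hφK : ∀ k ∈ K, 0 ≤ φ k) (hφ : φ ≠ 0)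
    {v : Y} (hv : v ∈ interior K) : 0 < φ v := by
  obtain ⟨w, hw⟩ : ∃ w, φ w < 0 := by
    obtain ⟨w, hw⟩ := DFunLike.ne_iff.mp hφ
    rcases (ne_of_ne_of_eq hw rfl : φ w ≠ 0).lt_or_gt with h | h
    · exact ⟨w, h⟩
    · exact ⟨-w, by simpa using h⟩
  obtain ⟨ε, hε, hvw⟩ := exists_pos_add_smul_mem_interior hv w
  have := hφK _ (interior_subset hvw)
  rw [map_add, map_smul, smul_eq_mul] at this
  nlinarith

/-- The weak supremum is `y - t₀ • k₀`, where `t₀` is the largest `t` for which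
`y - t • k₀` is not strictly dominated by a point of `V`. -/
theorem exists_mem_wSupElems_sub_mem_s10 (hKconv : Convex ℝ K)
    (hKcone : ∀ c : ℝ, 0 < c → c • K ⊆ K) (hK0 : (0 : Y) ∈ K) {k₀ : Y}
    (hk₀ : k₀ ∈ interior K) {V : Set Y} (hV : V.Nonempty) {y : Y}
    (hy : ∀ v ∈ V, v - y ∉ interior K) : ∃ w ∈ wSupElems K V, y - w ∈ K := by
  set T : Set ℝ := {t | ∃ v ∈ V, v - (y - t • k₀) ∈ interior K}
  have hT_open : IsOpen T := by
    have : T = ⋃ v ∈ V, (fun t : ℝ => v - (y - t • k₀)) ⁻¹' interior K := by ext; simp [T]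
    rw [this]
    exact isOpen_biUnion fun v _ => isOpen_interior.preimage (by fun_prop)
  have hT_mono : ∀ t ∈ T, ∀ t', t ≤ t' → t' ∈ T := by
    rintro t ⟨v, hv, hvt⟩ t' htt'
    refine ⟨v, hv, ?_⟩
    convert cone_interior_add_mem hKconv hKcone hvt
      (cone_smul_mem hKcone hK0 (sub_nonneg.mpr htt') (interior_subset hk₀)) using 1
    rw [sub_smul]; abel
  have hT_ne : T.Nonempty := by
    obtain ⟨v, hv⟩ := hV
    obtain ⟨ε, hε, hmem⟩ := exists_pos_add_smul_mem_interior hk₀ (v - y)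
    refine ⟨ε⁻¹, v, hv, ?_⟩
    convert cone_smul_mem_interior hKcone (inv_pos.mpr hε) hmem using 1
    rw [smul_add, smul_smul, inv_mul_cancel₀ hε.ne', one_smul]; abel
  have h0 : (0 : ℝ) ∈ Tᶜ := fun ⟨v, hv, hvy⟩ => hy v hv (by simpa using hvy)
  have hbdd : BddAbove Tᶜ := by
    obtain ⟨t₁, ht₁⟩ := hT_ne
    exact ⟨t₁, fun t ht => le_of_not_ge fun h => ht (hT_mono t₁ ht₁ t h)⟩
  set t₀ := sSup Tᶜ
  have ht₀ : t₀ ∉ T := hT_open.isClosed_compl.csSup_mem ⟨0, h0⟩ hbdd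
  have hT_gt : ∀ t, t₀ < t → t ∈ T := fun t ht => not_not.mp (notMem_of_csSup_lt ht hbdd)
  refine ⟨y - t₀ • k₀, ⟨fun v hv hvw => ht₀ ⟨v, hv, sub_mem_neg_iff.mp hvw⟩, ?_⟩, ?_⟩
  · intro u hu
    obtain ⟨ε, hε, hmem⟩ := exists_pos_add_smul_mem_interior (sub_mem_neg_iff.mp hu) (-k₀)
    obtain ⟨v, hv, hvT⟩ := hT_gt (t₀ + ε) (by linarith)
    refine ⟨v, hv, sub_mem_neg_iff.mpr ?_⟩
    convert cone_interior_add_mem hKconv hKcone hvT (interior_subset hmem) using 1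
    rw [add_smul, smul_neg]; abel
  · simpa using cone_smul_mem hKcone hK0 (le_csSup hbdd h0) (interior_subset hk₀)

theorem mem_epiConj_iff {X : Type*} [AddCommGroup X] [Module ℝ X] [TopologicalSpace X]
    (hKconv : Convex ℝ K) (hKcone : ∀ c : ℝ, 0 < c → c • K ⊆ K)
    (hK0 : (0 : Y) ∈ K) (hKint : (interior K).Nonempty) {H : X → Y} {dom : Set X}
    (hdom : dom.Nonempty) {p : (X →L[ℝ] Y) × Y} :
    p ∈ epiConj K H dom ↔ ∀ x ∈ dom, p.1 x - H x - p.2 ∉ interior K := by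
  constructor
  · rintro ⟨w, hw, hyw⟩ x hx
    exact sub_notMem_interior_of_mem_wSupElems hKconv hKcone hw hyw _ ⟨x, hx, rfl⟩
  · intro h
    obtain ⟨k₀, hk₀⟩ := hKint
    exact exists_mem_wSupElems_sub_mem_s10 hKconv hKcone hK0 hk₀ (hdom.image _)
      (forall_mem_image.mpr h)

theorem exists_dual_le_of_forall_sub_notMem_interior (hKconv : Convex ℝ K)
    (hKcone : ∀ c : ℝ, 0 < c → c • K ⊆ K) (hK0 : (0 : Y) ∈ K) {k₀ : Y}
    (hk₀ : k₀ ∈ interior K) {W : Set Y} (hW : Convex ℝ W) (hWne : W.Nonempty)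
    (hWK : ∀ w ∈ W, ∀ k ∈ K, w - k ∈ W) {y : Y} (hy : ∀ w ∈ W, w - y ∉ interior K) :
    ∃ ty : Y →L[ℝ] ℝ, (∀ k ∈ K, 0 ≤ ty k) ∧ ty k₀ = 1 ∧ ∀ w ∈ W, ty w ≤ ty y := by
  have hdisj : Disjoint (y +ᵥ interior K) W := by
    refine disjoint_left.mpr ?_
    rintro _ ⟨k, hk, rfl⟩ hkW
    exact hy _ hkW (by simpa using hk)
  obtain ⟨φ, u, hφy, hφW⟩ :=
    geometric_hahn_banach_open (hKconv.interior.vadd y) (isOpen_interior.vadd y) hW hdisj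
  have hφy' : ∀ k ∈ interior K, φ y + φ k < u := fun k hk => by
    simpa using hφy _ ⟨k, hk, rfl⟩
  obtain ⟨w₀, hw₀⟩ := hWne
  have hφK : ∀ k ∈ K, φ k ≤ 0 := fun k hk =>
    nonpos_of_forall_nonneg_mul_le (b := φ w₀ - u) fun t ht => by
    have := hφW _ (hWK w₀ hw₀ _ (cone_smul_mem hKcone hK0 ht hk))
    rw [map_sub, map_smul, smul_eq_mul] at this
    linarith
  have hφk₀ : φ k₀ < 0 := by
    have hne : -φ ≠ 0 := fun h => by
      have h1 := hφy' k₀ hk₀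
      have h2 := hφW w₀ hw₀
      simp only [neg_eq_zero.mp h, zero_apply] at h1 h2
      linarith
    simpa using pos_of_mem_interior_of_nonneg (φ := -φ) (by simpa using hφK) hne hk₀
  have hle : ∀ w ∈ W, φ y ≤ φ w := fun w hw => le_of_forall_pos_lt_add fun ε hε => by
    have := hφy' _ (cone_smul_mem_interior hKcone (div_pos hε (neg_pos.mpr hφk₀)) hk₀)
    rw [map_smul, smul_eq_mul, div_mul_eq_mul_div, div_neg, mul_div_cancel_right₀ _ hφk₀.ne]
      at this
    linarith [hφW w hw]
  refine ⟨(φ k₀)⁻¹ • φ, fun k hk => ?_, ?_, fun w hw => ?_⟩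
  · simpa using mul_nonneg_of_nonpos_of_nonpos (inv_nonpos.mpr hφk₀.le) (hφK k hk)
  · simp [inv_mul_cancel₀ hφk₀.ne]
  · simpa using mul_le_mul_of_nonpos_left (hle w hw) (inv_nonpos.mpr hφk₀.le)

end Cone

theorem mem_closure_of_forall_finset {ι E F : Type*} [TopologicalSpace E] [TopologicalSpace F]
    {Q : Set ((ι → E) × F)} {g : ι → E} {r : F}
    (h : ∀ I : Finset ι, ((fun i : I => g i), r) ∈
      closure ((fun q : (ι → E) × F => ((fun i : I => q.1 i), q.2)) '' Q)) :
    (g, r) ∈ closure Q := by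
  refine mem_closure_iff.mpr fun o ho hgo => ?_
  obtain ⟨o₁, o₂, ho₁, ho₂, hg₁, hr₂, ho⟩ := isOpen_prod_iff.mp ho g r hgo
  obtain ⟨I, u, hu, hIu⟩ := isOpen_pi_iff.mp ho₁ g hg₁
  obtain ⟨_, ⟨hq₁, hq₂⟩, q, hq, rfl⟩ := mem_closure_iff.mp (h I)
    ((univ.pi fun i : I => u i) ×ˢ o₂)
    ((isOpen_set_pi finite_univ fun i _ => (hu i.1 i.2).1).prod ho₂)
    ⟨fun i _ => (hu i.1 i.2).2, hr₂⟩
  exact ⟨q, ho ⟨hIu fun i hi => hq₁ ⟨i, hi⟩ trivial, hq₂⟩, hq⟩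

theorem mem_closure_of_forall_sum_le {ι : Type*} {Q : Set ((ι → ℝ) × ℝ)} (hQ : Convex ℝ Q)
    {g : ι → ℝ} {r₀ : ℝ}
    (h : ∀ (I : Finset ι) (c : I → ℝ) (s u : ℝ),
      (∀ q ∈ Q, u < ∑ i, c i * q.1 i + s * q.2) → u ≤ ∑ i, c i * g i + s * r₀) :
    (g, r₀) ∈ closure Q := by
  classical
  refine mem_closure_of_forall_finset fun I => ?_
  by_contra hI
  let ρ := LinearMap.prodMap (LinearMap.funLeft ℝ ℝ ((↑) : I → ι)) (LinearMap.id : ℝ →ₗ[ℝ] ℝ)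
  obtain ⟨φ, u, hφ, hφQ⟩ :=
    geometric_hahn_banach_point_closed (hQ.linear_image ρ).closure isClosed_closure hI
  have hφ_apply : ∀ (v : I → ℝ) (r : ℝ),
      φ (v, r) = ∑ i, φ (fun j => if i = j then 1 else 0, 0) * v i + φ (0, 1) * r := by
    intro v r
    have hv := (φ.toLinearMap.comp (LinearMap.inl ℝ (I → ℝ) ℝ)).pi_apply_eq_sum_univ v
    have : ((v, r) : (I → ℝ) × ℝ) = (v, 0) + r • (0, 1) := by simp
    simp only [LinearMap.comp_apply, LinearMap.inl_apply, ContinuousLinearMap.coe_coe] at hv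
    rw [this, map_add, map_smul, hv, smul_eq_mul, mul_comm r]
    simp only [smul_eq_mul, mul_comm (v _)]
  rw [hφ_apply] at hφ
  refine (h I _ _ u fun q hq => ?_).not_gt hφ
  have := hφQ (ρ q) (subset_closure ⟨q, hq, rfl⟩)
  rwa [show ρ q = ((fun i : I => q.1 i), q.2) from rfl, hφ_apply] at this

section Perturbation

variable {X Z : Type*}

def perturbationEpigraph [AddCommGroup Z] (S : Set Z) (D : Set X) (G : X → Z) (f : X → ℝ) :
    Set (X × Z × ℝ) :=
  {q | q.1 ∈ D ∧ q.2.1 - G q.1 ∈ S ∧ f q.1 ≤ q.2.2}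

theorem perturbationEpigraph_eq_inter [AddCommGroup Z] {S : Set Z} {C domF domG : Set X}
    {G : X → Z} {f : X → ℝ} :
    perturbationEpigraph S (C ∩ domF ∩ domG) G f =
      Prod.fst ⁻¹' C ∩ (fun q : X × Z × ℝ => (q.1, q.2.1)) ⁻¹' {p | p.1 ∈ domG ∧ p.2 - G p.1 ∈ S}
        ∩ (fun q : X × Z × ℝ => (q.1, q.2.2)) ⁻¹' {p | p.1 ∈ domF ∧ f p.1 ≤ p.2} := by
  ext
  simp only [perturbationEpigraph, mem_inter_iff, mem_preimage, mem_ofPred_eq]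
  tauto

theorem isClosed_perturbationEpigraph [AddCommGroup Z] [TopologicalSpace X] [TopologicalSpace Z]
    {S : Set Z} {C domF domG : Set X} {G : X → Z} {f : X → ℝ} (hCcl : IsClosed C)
    (hGcl : IsClosed {p : X × Z | p.1 ∈ domG ∧ p.2 - G p.1 ∈ S})
    (hfcl : IsClosed {p : X × ℝ | p.1 ∈ domF ∧ f p.1 ≤ p.2}) :
    IsClosed (perturbationEpigraph S (C ∩ domF ∩ domG) G f) := by
  rw [perturbationEpigraph_eq_inter]
  exact ((hCcl.preimage continuous_fst).inter (hGcl.preimage (by fun_prop))).inter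
    (hfcl.preimage (by fun_prop))

variable [AddCommGroup X] [Module ℝ X] [AddCommGroup Z] [Module ℝ Z]

theorem convex_constraintSet {S : Set Z} {C domG : Set X} {G : X → Z} (hCconv : Convex ℝ C)
    (hGconv : Convex ℝ {p : X × Z | p.1 ∈ domG ∧ p.2 - G p.1 ∈ S}) :
    Convex ℝ {x | x ∈ C ∧ x ∈ domG ∧ G x ∈ -S} := by
  convert hCconv.inter (hGconv.linear_preimage (LinearMap.inl ℝ X Z)) using 1
  ext x
  simp only [mem_ofPred_eq, mem_inter_iff, mem_preimage, LinearMap.inl_apply, zero_sub, mem_neg]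

theorem convex_perturbationEpigraph {S : Set Z} {C domF domG : Set X} {G : X → Z} {f : X → ℝ}
    (hCconv : Convex ℝ C)
    (hGconv : Convex ℝ {p : X × Z | p.1 ∈ domG ∧ p.2 - G p.1 ∈ S})
    (hfconv : Convex ℝ {p : X × ℝ | p.1 ∈ domF ∧ f p.1 ≤ p.2}) :
    Convex ℝ (perturbationEpigraph S (C ∩ domF ∩ domG) G f) := by
  rw [perturbationEpigraph_eq_inter]
  refine ((hCconv.linear_preimage (LinearMap.fst ℝ X (Z × ℝ))).inter
    (hGconv.linear_preimage ((LinearMap.fst ℝ X (Z × ℝ)).prod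
      ((LinearMap.fst ℝ Z ℝ).comp (LinearMap.snd ℝ X (Z × ℝ)))))).inter
    (hfconv.linear_preimage ((LinearMap.fst ℝ X (Z × ℝ)).prod
      ((LinearMap.snd ℝ Z ℝ).comp (LinearMap.snd ℝ X (Z × ℝ)))))

variable [TopologicalSpace X] [TopologicalSpace Z] {S : Set Z} {D : Set X} {G : X → Z} {f : X → ℝ}

/-- `(xs, r)` lies in the epigraph of `(f + ι_D + zs ∘ G)*`, with `zs` in the dual cone `S⁺`. -/
def IsLagrangeMinorant (S : Set Z) (D : Set X) (G : X → Z) (f : X → ℝ) (xs : X →L[ℝ] ℝ)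
    (zs : Z →L[ℝ] ℝ) (r : ℝ) : Prop :=
  (∀ s ∈ S, 0 ≤ zs s) ∧ ∀ x ∈ D, xs x - f x - zs (G x) ≤ r

theorem IsLagrangeMinorant.mono {xs : X →L[ℝ] ℝ} {zs : Z →L[ℝ] ℝ} {r r' : ℝ}
    (h : IsLagrangeMinorant S D G f xs zs r) (hr : r ≤ r') : IsLagrangeMinorant S D G f xs zs r' :=
  ⟨h.1, fun x hx => (h.2 x hx).trans hr⟩

/-- Normalising by `1 + τ * a` keeps the coefficient of `f` equal to `1`, so that a separating
functional with `a = 0` can still be added to a minorant. -/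
theorem IsLagrangeMinorant.add_separation {xm xs : X →L[ℝ] ℝ} {zm zs : Z →L[ℝ] ℝ}
    {rm a u : ℝ} (hm : IsLagrangeMinorant S D G f xm zm rm) (ha : 0 ≤ a)
    (hzs : ∀ s ∈ S, 0 ≤ zs s) (hsep : ∀ x ∈ D, u < xs x + zs (G x) + a * f x) {τ : ℝ}
    (hτ : 0 ≤ τ) :
    IsLagrangeMinorant S D G f ((1 + τ * a)⁻¹ • (xm - τ • xs)) ((1 + τ * a)⁻¹ • (zm + τ • zs))
      ((1 + τ * a)⁻¹ * (rm - τ * u)) := by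
  have hc : 0 < 1 + τ * a := by positivity
  refine ⟨fun s hs => ?_, fun x hx => ?_⟩
  · have := hm.1 s hs
    have := hzs s hs
    simp only [smul_apply, add_apply, smul_eq_mul]
    positivity
  · have h1 := hm.2 x hx
    have h2 := mul_le_mul_of_nonneg_left (hsep x hx).le hτ
    simp only [smul_apply, add_apply, sub_apply, smul_eq_mul]
    rw [show (1 + τ * a)⁻¹ * (xm x - τ * xs x) - f x - (1 + τ * a)⁻¹ * (zm (G x) + τ * zs (G x)) =
      (1 + τ * a)⁻¹ * (xm x - τ * xs x - (zm (G x) + τ * zs (G x)) - (1 + τ * a) * f x) by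
        field_simp; ring]
    exact mul_le_mul_of_nonneg_left (by linarith) (inv_nonneg.mpr hc.le)

def lagrangeSet (S : Set Z) (D : Set X) (G : X → Z) (f : X → ℝ) : Set ((X → ℝ) × ℝ) :=
  {q | ∃ (xs : X →L[ℝ] ℝ) (zs : Z →L[ℝ] ℝ), ⇑xs = q.1 ∧ IsLagrangeMinorant S D G f xs zs q.2}

theorem convex_lagrangeSet : Convex ℝ (lagrangeSet S D G f) := by
  rintro ⟨_, r₁⟩ ⟨xs₁, zs₁, rfl, h₁⟩ ⟨_, r₂⟩ ⟨xs₂, zs₂, rfl, h₂⟩ a b ha hb hab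
  refine ⟨a • xs₁ + b • xs₂, a • zs₁ + b • zs₂, by ext; simp, fun s hs => ?_, fun x hx => ?_⟩
  · have := h₁.1 s hs
    have := h₂.1 s hs
    simp only [add_apply, smul_apply, smul_eq_mul]
    positivity
  · have := mul_le_mul_of_nonneg_left (h₁.2 x hx) ha
    have := mul_le_mul_of_nonneg_left (h₂.2 x hx) hb
    simp only [add_apply, smul_apply, smul_eq_mul, Prod.snd_add, Prod.smul_snd]
    have hf : f x = a * f x + b * f x := by rw [← add_mul, hab, one_mul]
    linarith

variable [IsTopologicalAddGroup X] [ContinuousSMul ℝ X] [LocallyConvexSpace ℝ X]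
  [IsTopologicalAddGroup Z] [ContinuousSMul ℝ Z] [LocallyConvexSpace ℝ Z]

theorem exists_separation_of_notMem_perturbationEpigraph (hS0 : (0 : Z) ∈ S)
    (hScone : ∀ c : ℝ, 0 < c → c • S ⊆ S) (hEcl : IsClosed (perturbationEpigraph S D G f))
    (hEconv : Convex ℝ (perturbationEpigraph S D G f)) {xb : X} (hxb : xb ∈ D)
    {q : X × Z × ℝ} (hq : q ∉ perturbationEpigraph S D G f) :
    ∃ (xs : X →L[ℝ] ℝ) (zs : Z →L[ℝ] ℝ) (a u : ℝ), 0 ≤ a ∧ (∀ s ∈ S, 0 ≤ zs s) ∧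
      (∀ x ∈ D, u < xs x + zs (G x) + a * f x) ∧ xs q.1 + zs q.2.1 + a * q.2.2 < u := by
  obtain ⟨φ, u, hφq, hφE⟩ := geometric_hahn_banach_point_closed hEconv hEcl hq
  set xs := φ.comp (ContinuousLinearMap.inl ℝ X (Z × ℝ))
  set zs := φ.comp ((ContinuousLinearMap.inr ℝ X (Z × ℝ)).comp (ContinuousLinearMap.inl ℝ Z ℝ))
  set a := φ (0, 0, 1)
  have hφ : ∀ x z t, φ (x, z, t) = xs x + zs z + a * t := fun x z t => by
    have : ((x, z, t) : X × Z × ℝ) = (x, 0, 0) + (0, z, 0) + t • (0, 0, 1) := by simp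
    rw [this, map_add, map_add, map_smul, smul_eq_mul, mul_comm]
    rfl
  have hE : ∀ x ∈ D, ∀ z, z - G x ∈ S → ∀ t, f x ≤ t → u < xs x + zs z + a * t :=
    fun x hx z hz t ht => hφ x z t ▸ hφE (x, z, t) ⟨hx, hz, ht⟩
  have hrec : ∀ s ∈ S, ∀ t : ℝ, 0 ≤ t → 0 ≤ zs s + a * t := fun s hs t ht => by
    refine neg_nonpos.mp (nonpos_of_forall_nonneg_mul_le
      (b := xs xb + zs (G xb) + a * f xb - u) fun τ hτ => ?_)
    have := hE xb hxb (G xb + τ • s) (by simpa using cone_smul_mem hScone hS0 hτ hs)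
      (f xb + τ * t) (by nlinarith)
    rw [map_add, map_smul, smul_eq_mul] at this
    linarith
  refine ⟨xs, zs, a, u, by simpa using hrec 0 hS0 1 zero_le_one, fun s hs => by
    simpa using hrec s hs 0 le_rfl, fun x hx => hE x hx _ (by simpa using hS0) _ le_rfl, ?_⟩
  rwa [← hφ]

theorem exists_isLagrangeMinorant (hS0 : (0 : Z) ∈ S) (hScone : ∀ c : ℝ, 0 < c → c • S ⊆ S)
    (hEcl : IsClosed (perturbationEpigraph S D G f))
    (hEconv : Convex ℝ (perturbationEpigraph S D G f)) {xb : X} (hxb : xb ∈ D) :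
    ∃ xs zs r, IsLagrangeMinorant S D G f xs zs r := by
  have hq : (xb, G xb, f xb - 1) ∉ perturbationEpigraph S D G f := fun h => by
    linarith [h.2.2]
  obtain ⟨xs, zs, a, u, -, hzs, hsep, hq⟩ :=
    exists_separation_of_notMem_perturbationEpigraph hS0 hScone hEcl hEconv hxb hq
  have ha : 0 < a := by linarith [hsep xb hxb]
  refine ⟨-a⁻¹ • xs, a⁻¹ • zs, -(a⁻¹ * u), fun s hs => ?_, fun x hx => ?_⟩
  · simpa using mul_nonneg (inv_nonneg.mpr ha.le) (hzs s hs)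
  · have := mul_lt_mul_of_pos_left (hsep x hx) (inv_pos.mpr ha)
    simp only [smul_apply, smul_eq_mul, neg_mul]
    rw [mul_add, mul_add, inv_mul_cancel_left₀ ha.ne'] at this
    linarith

theorem mem_perturbationEpigraph_of_forall_isLagrangeMinorant (hS0 : (0 : Z) ∈ S)
    (hScone : ∀ c : ℝ, 0 < c → c • S ⊆ S) (hEcl : IsClosed (perturbationEpigraph S D G f))
    (hEconv : Convex ℝ (perturbationEpigraph S D G f)) {xb : X} (hxb : xb ∈ D)
    {q : X × Z × ℝ}
    (h : ∀ xs zs r, IsLagrangeMinorant S D G f xs zs r → xs q.1 - zs q.2.1 - q.2.2 ≤ r) :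
    q ∈ perturbationEpigraph S D G f := by
  by_contra hq
  obtain ⟨xs, zs, a, u, ha, hzs, hsep, hq⟩ :=
    exists_separation_of_notMem_perturbationEpigraph hS0 hScone hEcl hEconv hxb hq
  obtain ⟨xm, zm, rm, hm⟩ := exists_isLagrangeMinorant hS0 hScone hEcl hEconv hxb
  have := nonpos_of_forall_nonneg_mul_le (a := u - (xs q.1 + zs q.2.1 + a * q.2.2))
    (b := rm - xm q.1 + zm q.2.1 + q.2.2) fun τ hτ => by
      have hc : 0 < 1 + τ * a := by positivity
      have h := h _ _ _ (hm.add_separation ha hzs hsep hτ)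
      simp only [smul_apply, add_apply, sub_apply, smul_eq_mul] at h
      field_simp at h
      nlinarith
  linarith

/-- The points `(c⁻¹ • (xb - t • x'), 0, c⁻¹ * (f xb - t * u))`, `c = 1 + t * s`, lie in the
perturbation epigraph; letting `t → ∞` gives the claim. -/
theorem le_of_forall_isLagrangeMinorant (hS0 : (0 : Z) ∈ S)
    (hScone : ∀ c : ℝ, 0 < c → c • S ⊆ S) (hEcl : IsClosed (perturbationEpigraph S D G f))
    (hEconv : Convex ℝ (perturbationEpigraph S D G f)) {xb : X} (hxb : xb ∈ D)
    (hxbG : -G xb ∈ S) {x₀ : X →L[ℝ] ℝ} {r₀ : ℝ} (h₀ : ∀ x ∈ D, -G x ∈ S → x₀ x - f x ≤ r₀)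
    {x' : X} {s u : ℝ} (h : ∀ xs zs r, IsLagrangeMinorant S D G f xs zs r → u < xs x' + s * r) :
    u ≤ x₀ x' + s * r₀ := by
  obtain ⟨xm, zm, rm, hm⟩ := exists_isLagrangeMinorant hS0 hScone hEcl hEconv hxb
  have hs : 0 ≤ s := neg_nonpos.mp <| nonpos_of_forall_nonneg_mul_le
    (b := xm x' + s * rm - u) fun t ht => by
      linarith [h _ _ _ (hm.mono (le_add_of_nonneg_right ht))]
  rw [← sub_nonpos, sub_add_eq_sub_sub]
  refine nonpos_of_forall_nonneg_mul_le (b := r₀ - x₀ xb + f xb) fun t ht => ?_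
  have hc : 0 < 1 + t * s := by positivity
  obtain ⟨hqD, hqS, hqf⟩ :
      ((1 + t * s)⁻¹ • (xb - t • x'), (0 : Z), (1 + t * s)⁻¹ * (f xb - t * u)) ∈
      perturbationEpigraph S D G f := by
    refine mem_perturbationEpigraph_of_forall_isLagrangeMinorant hS0 hScone hEcl hEconv hxb
      fun xs zs r hr => ?_
    have h₁ := hr.2 xb hxb
    have h₂ := hr.1 _ hxbG
    have h₃ := mul_le_mul_of_nonneg_left (h xs zs r hr).le ht
    rw [map_neg] at h₂
    simp only [map_smul, map_sub, map_zero, smul_eq_mul, sub_zero]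
    rw [← mul_sub, inv_mul_le_iff₀ hc]
    nlinarith
  have := h₀ _ hqD (by simpa using hqS)
  simp only [map_smul, map_sub, smul_eq_mul] at this
  have key : (1 + t * s)⁻¹ * (x₀ xb - t * x₀ x' - (f xb - t * u)) ≤ r₀ := by
    rw [mul_sub]
    exact le_trans (by gcongr) this
  rw [inv_mul_le_iff₀ hc] at key
  linarith

theorem mem_closure_lagrangeSet (hS0 : (0 : Z) ∈ S)
    (hScone : ∀ c : ℝ, 0 < c → c • S ⊆ S) (hEcl : IsClosed (perturbationEpigraph S D G f))
    (hEconv : Convex ℝ (perturbationEpigraph S D G f)) {xb : X} (hxb : xb ∈ D)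
    (hxbG : -G xb ∈ S) {x₀ : X →L[ℝ] ℝ} {r₀ : ℝ} (h₀ : ∀ x ∈ D, -G x ∈ S → x₀ x - f x ≤ r₀) :
    ((⇑x₀, r₀) : (X → ℝ) × ℝ) ∈ closure (lagrangeSet S D G f) := by
  refine mem_closure_of_forall_sum_le convex_lagrangeSet fun I c s u h => ?_
  have hsum : ∀ xs : X →L[ℝ] ℝ, ∑ i, c i * xs i = xs (∑ i, c i • (i : X)) := by
    simp [map_sum]
  rw [hsum]
  exact le_of_forall_isLagrangeMinorant hS0 hScone hEcl hEconv hxb hxbG h₀ fun xs zs r hr => by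
    simpa [hsum] using h (⇑xs, r) ⟨xs, zs, rfl, hr⟩

end Perturbation

theorem closure_prod_induced_coeFn {X Y : Type*} [AddCommGroup X] [Module ℝ X] [TopologicalSpace X]
    [AddCommGroup Y] [Module ℝ Y] [TopologicalSpace Y] (U : Set ((X →L[ℝ] Y) × Y)) :
    @closure ((X →L[ℝ] Y) × Y)
      (@instTopologicalSpaceProd (X →L[ℝ] Y) Y
        (TopologicalSpace.induced (fun L : X →L[ℝ] Y => (⇑L : X → Y)) Pi.topologicalSpace) _) U =
      (fun q : (X →L[ℝ] Y) × Y => (⇑q.1, q.2)) ⁻¹'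
        closure ((fun q : (X →L[ℝ] Y) × Y => (⇑q.1, q.2)) '' U) := by
  have := prod_induced_induced (fun L : X →L[ℝ] Y => (⇑L : X → Y)) (id : Y → Y)
  rw [induced_id] at this
  rw [this]
  ext
  exact closure_induced

section Representation

variable {X Y Z : Type*} [AddCommGroup X] [Module ℝ X] [AddCommGroup Y] [Module ℝ Y]
  [TopologicalSpace Y] {K : Set Y} {F : X → Y} {domF : Set X}

theorem convex_setOf_dual_comp_le (hK0 : (0 : Y) ∈ K)
    (hFconv : Convex ℝ {p : X × Y | p.1 ∈ domF ∧ p.2 - F p.1 ∈ K}) {ty : Y →L[ℝ] ℝ}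
    (hty : ∀ k ∈ K, 0 ≤ ty k) : Convex ℝ {p : X × ℝ | p.1 ∈ domF ∧ ty (F p.1) ≤ p.2} := by
  rintro ⟨x₁, t₁⟩ ⟨hx₁, ht₁⟩ ⟨x₂, t₂⟩ ⟨hx₂, ht₂⟩ a b ha hb hab
  obtain ⟨hx, hFx⟩ := hFconv (x := (x₁, F x₁)) (y := (x₂, F x₂)) ⟨hx₁, by simpa using hK0⟩
    ⟨hx₂, by simpa using hK0⟩ ha hb hab
  have := hty _ hFx
  dsimp only at ht₁ ht₂
  simp only [Prod.fst_add, Prod.smul_fst, Prod.snd_add, Prod.smul_snd, map_sub, map_add,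
    map_smul, smul_eq_mul] at hx this
  refine ⟨hx, ?_⟩
  simp only [Prod.fst_add, Prod.smul_fst, Prod.snd_add, Prod.smul_snd, smul_eq_mul]
  nlinarith [mul_le_mul_of_nonneg_left ht₁ ha, mul_le_mul_of_nonneg_left ht₂ hb]

variable [TopologicalSpace X] [IsTopologicalAddGroup Y] [ContinuousSMul ℝ Y]

theorem exists_scalarization_of_forall_sub_notMem_interior (hKconv : Convex ℝ K)
    (hKcone : ∀ c : ℝ, 0 < c → c • K ⊆ K) (hK0 : (0 : Y) ∈ K) {k₀ : Y} (hk₀ : k₀ ∈ interior K)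
    {M : Set X} (hMconv : Convex ℝ M) (hM : (M ∩ domF).Nonempty)
    (hFconv : Convex ℝ {p : X × Y | p.1 ∈ domF ∧ p.2 - F p.1 ∈ K}) {L : X →L[ℝ] Y} {y : Y}
    (h : ∀ x ∈ M ∩ domF, L x - F x - y ∉ interior K) :
    ∃ ty : Y →L[ℝ] ℝ, (∀ k ∈ K, 0 ≤ ty k) ∧ ty k₀ = 1 ∧ ∀ x ∈ M ∩ domF, ty (L x - F x) ≤ ty y := by
  have hFK : ∀ x, F x - F x ∈ K := fun x => by simpa using hK0
  obtain ⟨x, hxM, hxF⟩ := hM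
  obtain ⟨ty, htyK, htyk₀, hty⟩ := exists_dual_le_of_forall_sub_notMem_interior hKconv hKcone
    hK0 hk₀ (W := (fun q : X × Y => L q.1 - q.2) ''
      (Prod.fst ⁻¹' M ∩ {q | q.1 ∈ domF ∧ q.2 - F q.1 ∈ K}))
    (((hMconv.linear_preimage (LinearMap.fst ℝ X Y)).inter hFconv).linear_image
      (L.toLinearMap.comp (LinearMap.fst ℝ X Y) - LinearMap.snd ℝ X Y))
    ⟨_, (x, F x), ⟨hxM, hxF, hFK x⟩, rfl⟩
    (by
      rintro _ ⟨⟨x, y'⟩, ⟨hxM, hxF, hy'⟩, rfl⟩ k hk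
      refine ⟨(x, y' + k), ⟨hxM, hxF, ?_⟩, by simp [sub_add_eq_sub_sub]⟩
      simpa [add_sub_right_comm] using cone_add_mem hKconv hKcone hy' hk)
    (by
      rintro _ ⟨⟨x, y'⟩, ⟨hxM, hxF, hy'⟩, rfl⟩ hmem
      refine h x ⟨hxM, hxF⟩ ?_
      dsimp only at hmem hy'
      convert cone_interior_add_mem hKconv hKcone hmem hy' using 1
      abel)
  exact ⟨ty, htyK, htyk₀, fun x hx => hty _ ⟨(x, F x), ⟨hx.1, hx.2, hFK x⟩, rfl⟩⟩

variable [AddCommGroup Z] [Module ℝ Z] [TopologicalSpace Z] {S : Set Z} {C : Set X} {G : X → Z}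
  {domG : Set X}

theorem mem_epiConj_of_isLagrangeMinorant (hKconv : Convex ℝ K)
    (hKcone : ∀ c : ℝ, 0 < c → c • K ⊆ K) (hK0 : (0 : Y) ∈ K) (hKint : (interior K).Nonempty)
    {ty : Y →L[ℝ] ℝ} (hty : ∀ k ∈ interior K, 0 < ty k) {k₀ : Y} (htyk₀ : ty k₀ = 1)
    {D : Set X} (hD : D.Nonempty) (L : X →L[ℝ] Y) (y : Y) {xs : X →L[ℝ] ℝ} {zs : Z →L[ℝ] ℝ}
    {r : ℝ} (hr : IsLagrangeMinorant S D G (fun x => ty (F x)) xs zs r) :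
    (L + (xs - ty.comp L).smulRight k₀, y + (r - ty y) • k₀) ∈
      epiConj K (fun x => F x + zs.smulRight k₀ (G x)) D := by
  refine (mem_epiConj_iff hKconv hKcone hK0 hKint hD).mpr fun x hx hmem => ?_
  have := hty _ hmem
  simp only [map_sub, map_add, map_smul, add_apply, sub_apply, smul_eq_mul, htyk₀,
    ContinuousLinearMap.smulRight_apply, ContinuousLinearMap.comp_apply, mul_one] at this
  linarith [hr.2 x hx]

theorem mem_closure_of_mem_epiConj [IsTopologicalAddGroup X] [ContinuousSMul ℝ X]
    [LocallyConvexSpace ℝ X] [IsTopologicalAddGroup Z] [ContinuousSMul ℝ Z]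
    [LocallyConvexSpace ℝ Z] (hKconv : Convex ℝ K) (hKcone : ∀ c : ℝ, 0 < c → c • K ⊆ K)
    (hK0 : (0 : Y) ∈ K) (hKint : (interior K).Nonempty) (hScone : ∀ c : ℝ, 0 < c → c • S ⊆ S)
    (hS0 : (0 : Z) ∈ S) (hCcl : IsClosed C) (hCconv : Convex ℝ C)
    (hFconv : Convex ℝ {p : X × Y | p.1 ∈ domF ∧ p.2 - F p.1 ∈ K})
    (hFlsc : ∀ y' : Y →L[ℝ] ℝ, IsClosed {p : X × ℝ | p.1 ∈ domF ∧ y' (F p.1) ≤ p.2})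
    (hGconv : Convex ℝ {p : X × Z | p.1 ∈ domG ∧ p.2 - G p.1 ∈ S})
    (hGcl : IsClosed {p : X × Z | p.1 ∈ domG ∧ p.2 - G p.1 ∈ S})
    (hAF : ({x | x ∈ C ∧ x ∈ domG ∧ G x ∈ -S} ∩ domF).Nonempty) {p : (X →L[ℝ] Y) × Y}
    (hp : p ∈ epiConj K F ({x | x ∈ C ∧ x ∈ domG ∧ G x ∈ -S} ∩ domF)) :
    ((⇑p.1, p.2) : (X → Y) × Y) ∈ closure ((fun q : (X →L[ℝ] Y) × Y => (⇑q.1, q.2)) ''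
      ⋃ T ∈ {T : Z →L[ℝ] Y | ⇑T '' S ⊆ K},
        epiConj K (fun x => F x + T (G x)) (C ∩ domF ∩ domG)) := by
  obtain ⟨k₀, hk₀⟩ := hKint
  obtain ⟨ty, htyK, htyk₀, hty⟩ := exists_scalarization_of_forall_sub_notMem_interior hKconv
    hKcone hK0 hk₀ (convex_constraintSet hCconv hGconv) hAF hFconv
    ((mem_epiConj_iff hKconv hKcone hK0 ⟨k₀, hk₀⟩ hAF).mp hp)
  have htyint : ∀ k ∈ interior K, 0 < ty k :=
    fun k => pos_of_mem_interior_of_nonneg htyK (by rintro rfl; simp at htyk₀)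
  obtain ⟨xb, ⟨hxbC, hxbG, hxbS⟩, hxbF⟩ := hAF
  have hxbD : xb ∈ C ∩ domF ∩ domG := ⟨⟨hxbC, hxbF⟩, hxbG⟩
  have hscalar := mem_closure_lagrangeSet hS0 hScone
    (isClosed_perturbationEpigraph hCcl hGcl (hFlsc ty))
    (convex_perturbationEpigraph hCconv hGconv (convex_setOf_dual_comp_le hK0 hFconv htyK))
    hxbD (mem_neg.mp hxbS) (x₀ := ty.comp p.1) (r₀ := ty p.2)
    fun x hx hxS => by simpa using hty x ⟨⟨hx.1.1, hx.2, mem_neg.mpr hxS⟩, hx.1.2⟩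
  convert map_mem_closure (f := fun q : (X → ℝ) × ℝ =>
      ((fun x => p.1 x + (q.1 x - ty (p.1 x)) • k₀), p.2 + (q.2 - ty p.2) • k₀))
    (by fun_prop) hscalar ?_ using 1
  · simp
  rintro ⟨_, r⟩ ⟨xs, zs, rfl, hr⟩
  have hT : ⇑(zs.smulRight k₀) '' S ⊆ K := by
    rintro _ ⟨s, hs, rfl⟩
    exact cone_smul_mem hKcone hK0 (hr.1 s hs) (interior_subset hk₀)
  refine ⟨_, mem_biUnion hT (mem_epiConj_of_isLagrangeMinorant hKconv hKcone hK0 ⟨k₀, hk₀⟩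
    htyint htyk₀ ⟨xb, hxbD⟩ p.1 p.2 hr), ?_⟩
  ext x <;> simp

theorem mem_epiConj_of_mem_closure (hKconv : Convex ℝ K)
    (hKcone : ∀ c : ℝ, 0 < c → c • K ⊆ K) (hK0 : (0 : Y) ∈ K) (hKint : (interior K).Nonempty)
    (hAF : ({x | x ∈ C ∧ x ∈ domG ∧ G x ∈ -S} ∩ domF).Nonempty) {p : (X →L[ℝ] Y) × Y}
    (hp : ((⇑p.1, p.2) : (X → Y) × Y) ∈ closure ((fun q : (X →L[ℝ] Y) × Y => (⇑q.1, q.2)) ''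
      ⋃ T ∈ {T : Z →L[ℝ] Y | ⇑T '' S ⊆ K},
        epiConj K (fun x => F x + T (G x)) (C ∩ domF ∩ domG))) :
    p ∈ epiConj K F ({x | x ∈ C ∧ x ∈ domG ∧ G x ∈ -S} ∩ domF) := by
  refine (mem_epiConj_iff hKconv hKcone hK0 hKint hAF).mpr fun x hx => ?_
  obtain ⟨⟨hxC, hxG, hxS⟩, hxF⟩ := hx
  have hxD : x ∈ C ∩ domF ∩ domG := ⟨⟨hxC, hxF⟩, hxG⟩
  have hcl : IsClosed {q : (X → Y) × Y | q.1 x - F x - q.2 ∉ interior K} :=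
    (isOpen_interior.preimage (by fun_prop)).isClosed_compl
  refine closure_minimal ?_ hcl hp
  rintro _ ⟨q, hq, rfl⟩ hmem
  obtain ⟨T, hT, hq⟩ := mem_iUnion₂.mp hq
  have hTG : -T (G x) ∈ K := by simpa using hT ⟨-G x, hxS, rfl⟩
  refine (mem_epiConj_iff hKconv hKcone hK0 hKint ⟨x, hxD⟩).mp hq x hxD ?_
  convert cone_interior_add_mem hKconv hKcone hmem hTG using 1
  simp only
  abel

end Representation

theorem stmt10_general {X Y Z : Type*}
    [AddCommGroup X] [Module ℝ X] [TopologicalSpace X] [IsTopologicalAddGroup X]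
    [ContinuousSMul ℝ X] [LocallyConvexSpace ℝ X]
    [AddCommGroup Y] [Module ℝ Y] [TopologicalSpace Y] [IsTopologicalAddGroup Y]
    [ContinuousSMul ℝ Y]
    [AddCommGroup Z] [Module ℝ Z] [TopologicalSpace Z] [IsTopologicalAddGroup Z]
    [ContinuousSMul ℝ Z] [LocallyConvexSpace ℝ Z]
    (K : Set Y) (hKconv : Convex ℝ K)
    (hKcone : ∀ c : ℝ, 0 < c → c • K ⊆ K) (hK0 : (0:Y) ∈ K)
    (hKint : (interior K).Nonempty)
    (S : Set Z)
    (hScone : ∀ c : ℝ, 0 < c → c • S ⊆ S) (hS0 : (0:Z) ∈ S)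
    (C : Set X) (hCcl : IsClosed C) (hCconv : Convex ℝ C)
    (F : X → Y) (domF : Set X)
    (hFconv : Convex ℝ {p : X × Y | p.1 ∈ domF ∧ p.2 - F p.1 ∈ K})
    (hFlsc : ∀ y' : Y →L[ℝ] ℝ,
      IsClosed {p : X × ℝ | p.1 ∈ domF ∧ y' (F p.1) ≤ p.2})
    (G : X → Z) (domG : Set X)
    (hGconv : Convex ℝ {p : X × Z | p.1 ∈ domG ∧ p.2 - G p.1 ∈ S})
    (hGcl : IsClosed {p : X × Z | p.1 ∈ domG ∧ p.2 - G p.1 ∈ S})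
    (A : Set X) (hA : A = {x | x ∈ C ∧ x ∈ domG ∧ G x ∈ -S})
    (hAF : (A ∩ domF).Nonempty) :
    epiConj K F (A ∩ domF) =
      @closure ((X →L[ℝ] Y) × Y)
        (@instTopologicalSpaceProd (X →L[ℝ] Y) Y
      (TopologicalSpace.induced (fun L : X →L[ℝ] Y => (⇑L : X → Y)) Pi.topologicalSpace) _)
        (⋃ T ∈ {T : Z →L[ℝ] Y | ⇑T '' S ⊆ K},
          epiConj K (fun x => F x + T (G x)) (C ∩ domF ∩ domG)) := by
  subst hA
  rw [closure_prod_induced_coeFn]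
  ext p
  exact ⟨mem_closure_of_mem_epiConj hKconv hKcone hK0 hKint hScone hS0 hCcl hCconv hFconv hFlsc
      hGconv hGcl hAF,
    mem_epiConj_of_mem_closure hKconv hKcone hK0 hKint hAF⟩

theorem stmt10 {X Y Z : Type*}
    [AddCommGroup X] [Module ℝ X] [TopologicalSpace X] [IsTopologicalAddGroup X]
    [ContinuousSMul ℝ X] [T2Space X] [LocallyConvexSpace ℝ X]
    [AddCommGroup Y] [Module ℝ Y] [TopologicalSpace Y] [IsTopologicalAddGroup Y]
    [ContinuousSMul ℝ Y] [T2Space Y] [LocallyConvexSpace ℝ Y]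
    [AddCommGroup Z] [Module ℝ Z] [TopologicalSpace Z] [IsTopologicalAddGroup Z]
    [ContinuousSMul ℝ Z] [T2Space Z] [LocallyConvexSpace ℝ Z]
    (K : Set Y) (hKcl : IsClosed K) (hKconv : Convex ℝ K)
    (hKcone : ∀ c : ℝ, 0 < c → c • K ⊆ K) (hK0 : (0:Y) ∈ K)
    (hKpointed : K ∩ (-K) ⊆ {0}) (hKint : (interior K).Nonempty)
    (S : Set Z) (hScl : IsClosed S) (hSconv : Convex ℝ S)
    (hScone : ∀ c : ℝ, 0 < c → c • S ⊆ S) (hS0 : (0:Z) ∈ S)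
    (C : Set X) (hCne : C.Nonempty) (hCcl : IsClosed C) (hCconv : Convex ℝ C)
    (F : X → Y) (domF : Set X) (hFprop : domF.Nonempty)
    (hFconv : Convex ℝ {p : X × Y | p.1 ∈ domF ∧ p.2 - F p.1 ∈ K})
    (hFlsc : ∀ y' : Y →L[ℝ] ℝ,
      IsClosed {p : X × ℝ | p.1 ∈ domF ∧ y' (F p.1) ≤ p.2})
    (G : X → Z) (domG : Set X) (hGprop : domG.Nonempty)
    (hGconv : Convex ℝ {p : X × Z | p.1 ∈ domG ∧ p.2 - G p.1 ∈ S})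
    (hGcl : IsClosed {p : X × Z | p.1 ∈ domG ∧ p.2 - G p.1 ∈ S})
    (A : Set X) (hA : A = {x | x ∈ C ∧ x ∈ domG ∧ G x ∈ -S})
    (hAF : (A ∩ domF).Nonempty) :
    epiConj K F (A ∩ domF) =
      @closure ((X →L[ℝ] Y) × Y)
        (@instTopologicalSpaceProd (X →L[ℝ] Y) Y
      (TopologicalSpace.induced (fun L : X →L[ℝ] Y => (⇑L : X → Y)) Pi.topologicalSpace) _)
        (⋃ T ∈ {T : Z →L[ℝ] Y | ⇑T '' S ⊆ K},
          epiConj K (fun x => F x + T (G x)) (C ∩ domF ∩ domG)) :=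
  stmt10_general K hKconv hKcone hK0 hKint S hScone hS0 C hCcl hCconv F domF hFconv hFlsc G domG
    hGconv hGcl A hA hAF
end

section
/- (Weak Farkas lemma) Under the assumptions of the Slater-condition Farkas lemma, for every (L, y) ∈ L(X,Y) × Y: [x ∈ C, G(x) ∈ −S ⟹ F(x) − L(x) + y ∉ −int K] if and only if there exists T ∈ L₊^w(S,K) (i.e., T(S) ∩ (−int K) = ∅) such that F(x) + (T∘G)(x) − L(x) + y ∉ T(−S) − int K for all x ∈ C. -/
open Set Pointwise Topology Filter

/-!
Separate the open convex cone `-(int K × int S)` from the convex set of all `(F x + k, G x + s)`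
with `x ∈ C`, `k ∈ K`, `s ∈ S`; the hypothesis makes these two sets disjoint.
Because the first set is a cone, the separating functional `(ys, zs)` can be taken to vanish on
the threshold, so `ys > 0` on `int K`, `zs ≥ 0` on `S` and `ys ∘ F + zs ∘ G ≥ 0` on `C`; the
Slater point rules out `ys = 0`. Writing `zs = ys ∘ T` with `T z = zs z • k₀ / ys k₀` for some
`k₀ ∈ int K` turns this scalar inequality into the vector one.
-/

def coneEpigraph {X Y : Type*} [Sub Y] (K : Set Y) (D : Set X) (F : X → Y) : Set (X × Y) :=
  {p | p.1 ∈ D ∧ p.2 - F p.1 ∈ K}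

lemma nonpos_of_forall_pos_mul_lt {a u : ℝ} (h : ∀ c > 0, c * a < u) : a ≤ 0 := by
  have hlim : Tendsto (fun c : ℝ => u / c) atTop (𝓝 0) := tendsto_const_nhds.div_atTop tendsto_id
  refine ge_of_tendsto hlim ((eventually_gt_atTop 0).mono fun c hc => ?_)
  rw [le_div_iff₀ hc, mul_comm]
  exact (h c hc).le

lemma nonneg_of_forall_pos_mul_lt {a u : ℝ} (h : ∀ c > 0, c * a < u) : 0 ≤ u := by
  have hlim : Tendsto (fun c : ℝ => c * a) (𝓝[>] 0) (𝓝 (0 * a)) :=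
    ((continuous_mul_const a).tendsto 0).mono_left nhdsWithin_le_nhds
  rw [zero_mul] at hlim
  exact le_of_tendsto hlim (eventually_mem_nhdsWithin.mono fun c hc => (h c hc).le)

section Convexity

variable {X Y Z : Type*} [AddCommGroup X] [Module ℝ X] [AddCommGroup Y] [Module ℝ Y]
  [AddCommGroup Z] [Module ℝ Z]

lemma Convex.coneEpigraph_add_affine {K : Set Y} {D : Set X} {F : X → Y}
    (hF : Convex ℝ (coneEpigraph K D F)) (g : X →ᵃ[ℝ] Y) :
    Convex ℝ (coneEpigraph K D fun x => F x + g x) := by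
  rintro ⟨x₁, w₁⟩ ⟨hx₁, hw₁⟩ ⟨x₂, w₂⟩ ⟨hx₂, hw₂⟩ a b ha hb hab
  obtain ⟨hD, hK⟩ := hF (x := (x₁, w₁ - g x₁)) (y := (x₂, w₂ - g x₂))
    ⟨hx₁, by convert hw₁ using 1; dsimp only; abel⟩
    ⟨hx₂, by convert hw₂ using 1; dsimp only; abel⟩ ha hb hab
  refine ⟨hD, ?_⟩
  convert hK using 1
  simp only [Prod.fst_add, Prod.snd_add, Prod.smul_fst, Prod.smul_snd,
    Convex.combo_affine_apply hab]
  module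

lemma convex_proj_fiberProduct {C : Set X} {P : Set (X × Y)} {Q : Set (X × Z)}
    (hC : Convex ℝ C) (hP : Convex ℝ P) (hQ : Convex ℝ Q) :
    Convex ℝ {p : Y × Z | ∃ x ∈ C, (x, p.1) ∈ P ∧ (x, p.2) ∈ Q} := by
  rintro p ⟨x₁, hx₁, hP₁, hQ₁⟩ q ⟨x₂, hx₂, hP₂, hQ₂⟩ a b ha hb hab
  exact ⟨a • x₁ + b • x₂, hC hx₁ hx₂ ha hb hab, hP hP₁ hP₂ ha hb hab, hQ hQ₁ hQ₂ ha hb hab⟩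

end Convexity

section Cone

variable {E : Type*} [AddCommGroup E] [Module ℝ E] [TopologicalSpace E] {W : Set E}

lemma smul_mem_interior_of_smul_subset_s16 [ContinuousConstSMul ℝ E]
    (hW : ∀ c : ℝ, 0 < c → c • W ⊆ W) {c : ℝ} (hc : 0 < c) {w : E} (hw : w ∈ interior W) :
    c • w ∈ interior W :=
  interior_mono (hW c hc) <| by rw [interior_smul₀ hc.ne']; exact smul_mem_smul_set hw

lemma add_mem_interior_of_smul_subset [IsTopologicalAddGroup E] [ContinuousConstSMul ℝ E]
    (hconv : Convex ℝ W) (hW : ∀ c : ℝ, 0 < c → c • W ⊆ W)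
    {w v : E} (hw : w ∈ interior W) (hv : v ∈ W) : w + v ∈ interior W := by
  have hmid : (1 / 2 : ℝ) • w + (1 / 2 : ℝ) • v ∈ interior W :=
    hconv.combo_interior_self_mem_interior hw hv (by norm_num) (by norm_num) (by norm_num)
  convert smul_mem_interior_of_smul_subset_s16 hW two_pos hmid using 1
  module

lemma ContinuousLinearMap.pos_of_nonneg_on_isOpen [ContinuousAdd E] [ContinuousSMul ℝ E]
    {f : E →L[ℝ] ℝ} (hf : f ≠ 0) {U : Set E}
    (hU : IsOpen U) (h : ∀ u ∈ U, 0 ≤ f u) {u : E} (hu : u ∈ U) : 0 < f u := by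
  have himage : f '' U ⊆ interior (Ici 0) :=
    interior_maximal (image_subset_iff.2 h) (f.isOpenMap_of_ne_zero hf U hU)
  rw [interior_Ici] at himage
  exact himage (mem_image_of_mem f hu)

lemma nonneg_of_nonneg_on_interior [IsTopologicalAddGroup E] [ContinuousSMul ℝ E]
    (hconv : Convex ℝ W) (hint : (interior W).Nonempty)
    {f : E →L[ℝ] ℝ} (h : ∀ w ∈ interior W, 0 ≤ f w) {w : E} (hw : w ∈ W) : 0 ≤ f w := by
  refine closure_minimal h (isClosed_Ici.preimage f.continuous) ?_
  rw [hconv.closure_interior_eq_closure_of_nonempty_interior hint]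
  exact subset_closure hw

theorem geometric_hahn_banach_open_cone [IsTopologicalAddGroup E] [ContinuousSMul ℝ E]
    {O P : Set E} (hOconv : Convex ℝ O) (hOopen : IsOpen O)
    (hOcone : ∀ c : ℝ, 0 < c → ∀ p ∈ O, c • p ∈ O) (hOne : O.Nonempty) (hPconv : Convex ℝ P)
    (hPne : P.Nonempty) (hdisj : Disjoint O P) :
    ∃ f : E →L[ℝ] ℝ, (∀ p ∈ O, f p < 0) ∧ ∀ q ∈ P, 0 ≤ f q := by
  obtain ⟨f, u, hfO, hfP⟩ := geometric_hahn_banach_open hOconv hOopen hPconv hdisj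
  obtain ⟨p₀, hp₀⟩ := hOne
  obtain ⟨q₀, hq₀⟩ := hPne
  have hscaled : ∀ p ∈ O, ∀ c > 0, c * f p < u := fun p hp c hc => by
    simpa using hfO _ (hOcone c hc p hp)
  have hu : 0 ≤ u := nonneg_of_forall_pos_mul_lt (hscaled p₀ hp₀)
  have hf : f ≠ 0 := by
    rintro rfl
    have h₁ := hfO p₀ hp₀
    have h₂ := hfP q₀ hq₀
    simp only [zero_apply] at h₁ h₂
    linarith
  refine ⟨f, fun p hp => ?_, fun q hq => hu.trans (hfP q hq)⟩
  have hneg := (-f).pos_of_nonneg_on_isOpen (neg_ne_zero.2 hf) hOopen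
    (fun p hp => by simpa using nonpos_of_forall_pos_mul_lt (hscaled p hp)) hp
  simpa using hneg

end Cone

section Farkas

variable {X Y Z : Type*} [AddCommGroup X] [Module ℝ X]
  [AddCommGroup Y] [Module ℝ Y] [TopologicalSpace Y] [IsTopologicalAddGroup Y] [ContinuousSMul ℝ Y]
  [AddCommGroup Z] [Module ℝ Z] [TopologicalSpace Z] [IsTopologicalAddGroup Z] [ContinuousSMul ℝ Z]
  {K : Set Y} {S : Set Z} {C domF domG : Set X} {F : X → Y} {G : X → Z}

theorem exists_separating_functional_of_slater (hKconv : Convex ℝ K)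
    (hKcone : ∀ c : ℝ, 0 < c → c • K ⊆ K) (hK0 : (0 : Y) ∈ K) (hKint : (interior K).Nonempty)
    (hSconv : Convex ℝ S) (hScone : ∀ c : ℝ, 0 < c → c • S ⊆ S) (hS0 : (0 : Z) ∈ S)
    (hCconv : Convex ℝ C) (hFconv : Convex ℝ (coneEpigraph K domF F))
    (hGconv : Convex ℝ (coneEpigraph S domG G))
    (hslater : ∃ x' ∈ C ∩ domF, x' ∈ domG ∧ G x' ∈ -(interior S))
    (h : ∀ x ∈ C, x ∈ domG → G x ∈ -S → x ∈ domF → F x ∉ -(interior K)) :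
    ∃ (ys : Y →L[ℝ] ℝ) (zs : Z →L[ℝ] ℝ), (∀ k ∈ interior K, ∀ s ∈ interior S, 0 < ys k + zs s) ∧
      ∀ x ∈ C, x ∈ domF → x ∈ domG → 0 ≤ ys (F x) + zs (G x) := by
  obtain ⟨x₀, ⟨hx₀C, hx₀F⟩, hx₀G, hGx₀⟩ := hslater
  obtain ⟨k₀, hk₀⟩ := hKint
  set P := {p : Y × Z |
    ∃ x ∈ C, (x, p.1) ∈ coneEpigraph K domF F ∧ (x, p.2) ∈ coneEpigraph S domG G}
  have hmemP : ∀ x ∈ C, x ∈ domF → x ∈ domG → (F x, G x) ∈ P := fun x hx hxF hxG =>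
    ⟨x, hx, ⟨hxF, by simpa using hK0⟩, ⟨hxG, by simpa using hS0⟩⟩
  have hdisj : Disjoint (-(interior K ×ˢ interior S)) P := by
    rw [disjoint_left]
    rintro p ⟨hpK, hpS⟩ ⟨x, hxC, ⟨hxF, hFx⟩, ⟨hxG, hGx⟩⟩
    have hKx : -F x ∈ interior K := by
      convert add_mem_interior_of_smul_subset hKconv hKcone hpK hFx using 1
      rw [Prod.fst_neg]; abel
    have hSx : -G x ∈ interior S := by
      convert add_mem_interior_of_smul_subset hSconv hScone hpS hGx using 1
      rw [Prod.snd_neg]; abel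
    exact h x hxC hxG (by simpa using interior_subset hSx) hxF (by simpa using hKx)
  obtain ⟨f, hfO, hfP⟩ := geometric_hahn_banach_open_cone (hKconv.interior.prod hSconv.interior).neg
    (isOpen_interior.prod isOpen_interior).neg
    (fun c hc p ⟨hpK, hpS⟩ => by
      simpa using And.intro (smul_mem_interior_of_smul_subset_s16 hKcone hc hpK)
        (smul_mem_interior_of_smul_subset_s16 hScone hc hpS))
    ⟨-(k₀, -G x₀), by simpa using And.intro hk₀ hGx₀⟩
    (convex_proj_fiberProduct hCconv hFconv hGconv) ⟨_, hmemP x₀ hx₀C hx₀F hx₀G⟩ hdisj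
  refine ⟨f.comp (.inl ℝ Y Z), f.comp (.inr ℝ Y Z), fun k hk s hs => ?_, fun x hx hxF hxG => ?_⟩
  · rw [f.comp_inl_add_comp_inr (k, s)]
    have hneg := hfO (-(k, s)) (by simpa using And.intro hk hs)
    rw [map_neg] at hneg
    exact neg_neg_iff_pos.mp hneg
  · rw [f.comp_inl_add_comp_inr (F x, G x)]
    exact hfP _ (hmemP x hx hxF hxG)

theorem exists_multipliers_of_slater (hKconv : Convex ℝ K)
    (hKcone : ∀ c : ℝ, 0 < c → c • K ⊆ K) (hK0 : (0 : Y) ∈ K) (hKint : (interior K).Nonempty)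
    (hSconv : Convex ℝ S) (hScone : ∀ c : ℝ, 0 < c → c • S ⊆ S) (hS0 : (0 : Z) ∈ S)
    (hCconv : Convex ℝ C) (hFconv : Convex ℝ (coneEpigraph K domF F))
    (hGconv : Convex ℝ (coneEpigraph S domG G))
    (hslater : ∃ x' ∈ C ∩ domF, x' ∈ domG ∧ G x' ∈ -(interior S))
    (h : ∀ x ∈ C, x ∈ domG → G x ∈ -S → x ∈ domF → F x ∉ -(interior K)) :
    ∃ (ys : Y →L[ℝ] ℝ) (zs : Z →L[ℝ] ℝ), (∀ k ∈ interior K, 0 < ys k) ∧ (∀ s ∈ S, 0 ≤ zs s) ∧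
      ∀ x ∈ C, x ∈ domF → x ∈ domG → 0 ≤ ys (F x) + zs (G x) := by
  obtain ⟨ys, zs, hpos, hP⟩ := exists_separating_functional_of_slater hKconv hKcone hK0 hKint
    hSconv hScone hS0 hCconv hFconv hGconv hslater h
  obtain ⟨x₀, ⟨hx₀C, hx₀F⟩, hx₀G, hGx₀⟩ := hslater
  obtain ⟨k₀, hk₀⟩ := hKint
  have hs₀ : -G x₀ ∈ interior S := hGx₀
  have hys_int : ∀ k ∈ interior K, 0 ≤ ys k := fun k hk =>
    nonneg_of_forall_pos_mul_lt (a := -zs (-G x₀)) fun c hc => by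
      have := hpos k hk _ (smul_mem_interior_of_smul_subset_s16 hScone hc hs₀)
      rw [map_smul, smul_eq_mul] at this
      linarith
  have hzs_int : ∀ s ∈ interior S, 0 ≤ zs s := fun s hs =>
    nonneg_of_forall_pos_mul_lt (a := -ys k₀) fun c hc => by
      have := hpos _ (smul_mem_interior_of_smul_subset_s16 hKcone hc hk₀) s hs
      rw [map_smul, smul_eq_mul] at this
      linarith
  -- at the Slater point, `zs (G x₀)` is both `≥ 0` and `< 0` if `ys = 0`
  have hys : ys ≠ 0 := by
    rintro rfl
    have h₁ := hP x₀ hx₀C hx₀F hx₀G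
    have h₂ := hpos k₀ hk₀ _ hs₀
    simp only [zero_apply, zero_add, map_neg] at h₁ h₂
    linarith
  exact ⟨ys, zs, fun k hk => ys.pos_of_nonneg_on_isOpen hys isOpen_interior hys_int hk,
    fun s hs => nonneg_of_nonneg_on_interior hSconv ⟨_, hs₀⟩ hzs_int hs, hP⟩

end Farkas

section Multiplier

variable {Y Z : Type*} [AddCommGroup Y] [Module ℝ Y] [TopologicalSpace Y]
  [AddCommGroup Z] [Module ℝ Z] [TopologicalSpace Z]
  {K : Set Y} {S : Set Z} {ys : Y →L[ℝ] ℝ} {T : Z →L[ℝ] Y}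

lemma image_inter_neg_interior_eq_empty (hys : ∀ k ∈ interior K, 0 < ys k)
    (hT : ∀ s ∈ S, 0 ≤ ys (T s)) : (T '' S) ∩ (-(interior K)) = ∅ := by
  rw [eq_empty_iff_forall_notMem]
  rintro _ ⟨⟨s, hs, rfl⟩, hk⟩
  have := hys _ hk
  rw [map_neg] at this
  linarith [hT s hs]

lemma notMem_image_neg_sub_interior (hys : ∀ k ∈ interior K, 0 < ys k)
    (hT : ∀ s ∈ S, 0 ≤ ys (T s)) {w : Y} (hw : 0 ≤ ys w) : w ∉ T '' (-S) - interior K := by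
  rintro ⟨_, ⟨z, hz, rfl⟩, k, hk, rfl⟩
  have := hT (-z) hz
  rw [map_neg, map_neg] at this
  rw [map_sub] at hw
  linarith [hys k hk]

end Multiplier

theorem stmt16_general {X Y Z : Type*}
    [AddCommGroup X] [Module ℝ X] [TopologicalSpace X]
    [AddCommGroup Y] [Module ℝ Y] [TopologicalSpace Y] [IsTopologicalAddGroup Y]
    [ContinuousSMul ℝ Y]
    [AddCommGroup Z] [Module ℝ Z] [TopologicalSpace Z] [IsTopologicalAddGroup Z]
    [ContinuousSMul ℝ Z]
    (K : Set Y) (hKconv : Convex ℝ K)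
    (hKcone : ∀ c : ℝ, 0 < c → c • K ⊆ K) (hK0 : (0:Y) ∈ K) (hKint : (interior K).Nonempty)
    (S : Set Z) (hSconv : Convex ℝ S)
    (hScone : ∀ c : ℝ, 0 < c → c • S ⊆ S) (hS0 : (0:Z) ∈ S)
    (C : Set X) (hCconv : Convex ℝ C)
    (F : X → Y) (domF : Set X)
    (hFconv : Convex ℝ {p : X × Y | p.1 ∈ domF ∧ p.2 - F p.1 ∈ K})
    (G : X → Z) (domG : Set X)
    (hGconv : Convex ℝ {p : X × Z | p.1 ∈ domG ∧ p.2 - G p.1 ∈ S})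
    (hslater : ∃ x' ∈ C ∩ domF, x' ∈ domG ∧ G x' ∈ -(interior S)) :
    ∀ (L : X →L[ℝ] Y) (y : Y),
      ((∀ x, x ∈ C → x ∈ domG → G x ∈ -S → x ∈ domF →
          F x - L x + y ∉ -(interior K)) ↔
        ∃ T : Z →L[ℝ] Y, (⇑T '' S) ∩ (-(interior K)) = ∅ ∧
          ∀ x ∈ C, x ∈ domF → x ∈ domG →
            F x + T (G x) - L x + y ∉ (⇑T '' (-S) - interior K)) := by
  intro L y
  constructor
  · intro h
    have hFLy : Convex ℝ (coneEpigraph K domF fun x => F x - L x + y) := by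
      convert hFconv.coneEpigraph_add_affine (AffineMap.const ℝ X y - (L : X →ₗ[ℝ] Y).toAffineMap)
        using 3
      simp only [AffineMap.coe_sub, AffineMap.coe_const, LinearMap.coe_toAffineMap,
        ContinuousLinearMap.coe_coe, Pi.sub_apply, Function.const_apply]
      rw [sub_add_eq_add_sub, add_sub_assoc]
    obtain ⟨ys, zs, hys, hzs, hmult⟩ := exists_multipliers_of_slater hKconv hKcone hK0 hKint
      hSconv hScone hS0 hCconv hFLy hGconv hslater h
    obtain ⟨k₀, hk₀⟩ := hKint
    set T : Z →L[ℝ] Y := zs.smulRight ((ys k₀)⁻¹ • k₀)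
    have hT : ∀ z, ys (T z) = zs z := fun z => by simp [T, (hys k₀ hk₀).ne']
    have hTS : ∀ s ∈ S, 0 ≤ ys (T s) := fun s hs => (hT s).symm ▸ hzs s hs
    refine ⟨T, image_inter_neg_interior_eq_empty hys hTS, fun x hx hxF hxG => ?_⟩
    refine notMem_image_neg_sub_interior hys hTS ?_
    rw [show F x + T (G x) - L x + y = (F x - L x + y) + T (G x) by abel, map_add, hT]
    exact hmult x hx hxF hxG
  · rintro ⟨T, -, hT⟩ x hxC hxG hGx hxF hbad
    refine hT x hxC hxF hxG ?_
    convert sub_mem_sub (mem_image_of_mem T hGx) (mem_neg.mp hbad) using 1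
    abel

theorem stmt16 {X Y Z : Type*}
    [AddCommGroup X] [Module ℝ X] [TopologicalSpace X] [IsTopologicalAddGroup X]
    [ContinuousSMul ℝ X] [T2Space X] [LocallyConvexSpace ℝ X]
    [AddCommGroup Y] [Module ℝ Y] [TopologicalSpace Y] [IsTopologicalAddGroup Y]
    [ContinuousSMul ℝ Y] [T2Space Y] [LocallyConvexSpace ℝ Y]
    [AddCommGroup Z] [Module ℝ Z] [TopologicalSpace Z] [IsTopologicalAddGroup Z]
    [ContinuousSMul ℝ Z] [T2Space Z] [LocallyConvexSpace ℝ Z]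
    (K : Set Y) (hKcl : IsClosed K) (hKconv : Convex ℝ K)
    (hKcone : ∀ c : ℝ, 0 < c → c • K ⊆ K) (hK0 : (0:Y) ∈ K)
    (hKpointed : K ∩ (-K) ⊆ {0}) (hKint : (interior K).Nonempty)
    (S : Set Z) (hScl : IsClosed S) (hSconv : Convex ℝ S)
    (hScone : ∀ c : ℝ, 0 < c → c • S ⊆ S) (hS0 : (0:Z) ∈ S)
    (C : Set X) (hCne : C.Nonempty) (hCconv : Convex ℝ C)
    (F : X → Y) (domF : Set X) (hFprop : domF.Nonempty)
    (hFconv : Convex ℝ {p : X × Y | p.1 ∈ domF ∧ p.2 - F p.1 ∈ K})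
    (G : X → Z) (domG : Set X) (hGprop : domG.Nonempty)
    (hGconv : Convex ℝ {p : X × Z | p.1 ∈ domG ∧ p.2 - G p.1 ∈ S})
    (A : Set X) (hA : A = {x | x ∈ C ∧ x ∈ domG ∧ G x ∈ -S})
    (hAF : (A ∩ domF).Nonempty)
    (hslater : ∃ x' ∈ C ∩ domF, x' ∈ domG ∧ G x' ∈ -(interior S)) :
    ∀ (L : X →L[ℝ] Y) (y : Y),
      ((∀ x, x ∈ C → x ∈ domG → G x ∈ -S → x ∈ domF →
          F x - L x + y ∉ -(interior K)) ↔
        ∃ T : Z →L[ℝ] Y, (⇑T '' S) ∩ (-(interior K)) = ∅ ∧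
          ∀ x ∈ C, x ∈ domF → x ∈ domG →
            F x + T (G x) - L x + y ∉ (⇑T '' (-S) - interior K)) :=
  stmt16_general K hKconv hKcone hK0 hKint S hSconv hScone hS0 C hCconv F domF hFconv G domG hGconv
    hslater
end
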